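/- For G(κ) = −4κ²ℓ² + (κ²ℓ²+1)² cosh 2πκ − (κ²ℓ²−1)² cosh 2κ(ℓ₁+π) with ℓ, ℓ₁ > 0, one has G(κ) = −2ℓ₁(2π+ℓ₁)κ² + O(κ⁴) as κ → 0⁺; in particular G(κ) < 0 for all sufficiently small κ > 0. -/

import Mathlib

/-!
Expand both hyperbolic cosines to second order, `cosh y = 1 + y²/2 + O(y⁴)`. The constant terms
combine to `(κ²ℓ² + 1)² - (κ²ℓ² - 1)² = 4κ²ℓ²`, which cancels the first term of `G`, and the
remaining `κ²` coefficient is `((2π)² - (2(ℓ₁ + π))²) / 2 = -2ℓ₁(2π + ℓ₁)`. Everything else carries a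
factor `κ⁴`. Since this coefficient is negative, the quadratic term dominates near `0`.
-/

open Real Filter Asymptotics
open Topology

theorem Asymptotics.IsBigO.continuousAt_mul_left {α : Type*} [TopologicalSpace α] {x₀ : α}
    {q R g : α → ℝ} (hR : R =O[𝓝 x₀] g) (hq : ContinuousAt q x₀) :
    (fun x => q x * R x) =O[𝓝 x₀] g := by
  simpa only [one_mul] using (hq.tendsto.isBigO_one ℝ).mul hR

theorem abs_cosh_sub_one_sub_sq_div_two_le {x : ℝ} (hx : |x| ≤ 1) :
    |cosh x - 1 - x ^ 2 / 2| ≤ |x| ^ 4 * (5 / 96) := by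
  have h := Complex.cos_bound (x := x * Complex.I) (by simpa using hx)
  rw [Complex.cos_mul_I, mul_pow, Complex.I_sq, norm_mul, Complex.norm_I, mul_one,
    Complex.norm_real, Real.norm_eq_abs] at h
  have hcast : ((cosh x - 1 - x ^ 2 / 2 : ℝ) : ℂ) = Complex.cosh x - (1 - x ^ 2 * -1 / 2) := by
    push_cast; ring
  rwa [← Real.norm_eq_abs, ← Complex.norm_real, hcast]

theorem cosh_sub_one_sub_sq_div_two_isBigO :
    (fun x : ℝ => cosh x - 1 - x ^ 2 / 2) =O[𝓝 0] fun x => x ^ 4 := by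
  refine .of_bound (5 / 96) ?_
  filter_upwards [Metric.closedBall_mem_nhds (0 : ℝ) one_pos] with x hx
  rw [Metric.mem_closedBall, dist_zero_right, Real.norm_eq_abs] at hx
  rw [Real.norm_eq_abs, Real.norm_eq_abs, abs_pow, mul_comm]
  exact abs_cosh_sub_one_sub_sq_div_two_le hx

theorem cosh_mul_sub_one_sub_sq_div_two_isBigO (a : ℝ) :
    (fun x : ℝ => cosh (a * x) - 1 - (a * x) ^ 2 / 2) =O[𝓝 0] fun x => x ^ 4 := by
  have ha : Tendsto (fun x : ℝ => a * x) (𝓝 0) (𝓝 0) := by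
    simpa using (continuous_const_mul a).tendsto 0
  have hpow : (fun x : ℝ => (a * x) ^ 4) =O[𝓝 0] fun x => x ^ 4 := by
    simpa only [mul_pow] using (isBigO_refl (fun x : ℝ => x ^ 4) (𝓝 0)).const_mul_left (a ^ 4)
  exact (cosh_sub_one_sub_sq_div_two_isBigO.comp_tendsto ha).trans hpow

noncomputable def bandFunction (L a b κ : ℝ) : ℝ :=
  -(4 * κ ^ 2 * L) + (κ ^ 2 * L + 1) ^ 2 * cosh (a * κ) - (κ ^ 2 * L - 1) ^ 2 * cosh (b * κ)

theorem bandFunction_add_sq_isBigO (L a b : ℝ) :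
    (fun κ => bandFunction L a b κ + (b ^ 2 - a ^ 2) / 2 * κ ^ 2) =O[𝓝 0] fun κ => κ ^ 4 := by
  set R := fun (c κ : ℝ) => cosh (c * κ) - 1 - (c * κ) ^ 2 / 2
  have hsplit : (fun κ => bandFunction L a b κ + (b ^ 2 - a ^ 2) / 2 * κ ^ 2) = fun κ =>
      ((κ ^ 2 * L ^ 2 + 2 * L) * a ^ 2 - (κ ^ 2 * L ^ 2 - 2 * L) * b ^ 2) / 2 * κ ^ 4
        + (κ ^ 2 * L + 1) ^ 2 * R a κ - (κ ^ 2 * L - 1) ^ 2 * R b κ := by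
    funext κ
    simp only [bandFunction, R]
    ring
  rw [hsplit]
  refine (((isBigO_refl _ _).continuousAt_mul_left (by fun_prop)).add ?_).sub ?_ <;>
    exact (cosh_mul_sub_one_sub_sq_div_two_isBigO _).continuousAt_mul_left (by fun_prop)

theorem eventually_neg_of_add_sq_isBigO {g : ℝ → ℝ} {c : ℝ} (hc : 0 < c)
    (hg : (fun x => g x + c * x ^ 2) =O[𝓝[>] 0] fun x => x ^ 4) :
    ∀ᶠ x in 𝓝[>] 0, g x < 0 := by
  have hlo := hg.trans_isLittleO ((isLittleO_pow_pow (𝕜 := ℝ) (by norm_num : 2 < 4)).mono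
    nhdsWithin_le_nhds)
  filter_upwards [hlo.bound (half_pos hc), self_mem_nhdsWithin] with x hx hpos
  have hx2 : 0 < x ^ 2 := pow_pos hpos 2
  rw [Real.norm_eq_abs, Real.norm_of_nonneg hx2.le] at hx
  nlinarith [le_abs_self (g x + c * x ^ 2)]

theorem G_asymptotics_near_zero_general
    (ℓ ℓ₁ : ℝ) (hℓ₁ : 0 < ℓ₁)
    (G : ℝ → ℝ)
    (hG : ∀ κ, G κ = -(4 * κ^2 * ℓ^2) + (κ^2 * ℓ^2 + 1)^2 * cosh (2 * π * κ)
        - (κ^2 * ℓ^2 - 1)^2 * cosh (2 * κ * (ℓ₁ + π))) :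
    ((fun κ => G κ + 2 * ℓ₁ * (2 * π + ℓ₁) * κ^2)
        =O[nhdsWithin 0 (Set.Ioi 0)] (fun κ => κ^4)) ∧
    (∃ κ₀ > 0, ∀ κ, 0 < κ → κ < κ₀ → G κ < 0) := by
  have hG' : G = bandFunction (ℓ ^ 2) (2 * π) (2 * (ℓ₁ + π)) := by
    funext κ
    rw [hG, bandFunction, mul_right_comm 2 κ]
  have hcoeff : 2 * ℓ₁ * (2 * π + ℓ₁) = ((2 * (ℓ₁ + π)) ^ 2 - (2 * π) ^ 2) / 2 := by ring
  have hbigO : (fun κ => G κ + 2 * ℓ₁ * (2 * π + ℓ₁) * κ^2) =O[𝓝[>] 0] fun κ => κ ^ 4 := by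
    rw [hG', hcoeff]
    exact (bandFunction_add_sq_isBigO _ _ _).mono nhdsWithin_le_nhds
  refine ⟨hbigO, ?_⟩
  obtain ⟨κ₀, hκ₀, hneg⟩ := mem_nhdsGT_iff_exists_Ioo_subset.mp
    (eventually_neg_of_add_sq_isBigO (by positivity) hbigO)
  exact ⟨κ₀, hκ₀, fun κ hκ hκκ₀ => hneg ⟨hκ, hκκ₀⟩⟩

theorem G_asymptotics_near_zero
    (ℓ ℓ₁ : ℝ) (hℓ : 0 < ℓ) (hℓ₁ : 0 < ℓ₁)
    (G : ℝ → ℝ)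
    (hG : ∀ κ, G κ = -(4 * κ^2 * ℓ^2) + (κ^2 * ℓ^2 + 1)^2 * cosh (2 * π * κ)
        - (κ^2 * ℓ^2 - 1)^2 * cosh (2 * κ * (ℓ₁ + π))) :
    ((fun κ => G κ + 2 * ℓ₁ * (2 * π + ℓ₁) * κ^2)
        =O[nhdsWithin 0 (Set.Ioi 0)] (fun κ => κ^4)) ∧
    (∃ κ₀ > 0, ∀ κ, 0 < κ → κ < κ₀ → G κ < 0) :=
  G_asymptotics_near_zero_general ℓ ℓ₁ hℓ₁ G hG
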